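/- arXiv:1103.5348 — 5 statements merged into one kernel-verified Lean document; each statement's English description precedes it below -/
import Mathlib

section
/- Let B ≥ 1 be an integer and γ ≥ 0. For every α : Fin B → ℝ, writing C = ∑_b α_b², one has (1/(2B)) · log₂(1 + 2γC) ≤ (1/B) ∑_{b=1}^{B} (1/2) log₂(1 + 2γ α_b²) ≤ (1/2) · log₂(1 + 2γ C / B). -/
open Finset Real

lemma weierstrass {ι : Type*} (s : Finset ι) (f : ι → ℝ) (hf : ∀ i ∈ s, 0 ≤ f i) :
    1 + ∑ i ∈ s, f i ≤ ∏ i ∈ s, (1 + f i) := by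
  induction s using Finset.cons_induction with
  | empty => simp
  | cons a s ha ih =>
    rw [Finset.sum_cons, Finset.prod_cons]
    have hfa : 0 ≤ f a := hf a (Finset.mem_cons_self a s)
    have hs : ∀ i ∈ s, 0 ≤ f i := fun i hi => hf i (Finset.mem_cons_of_mem hi)
    have h1 : (0:ℝ) ≤ ∑ i ∈ s, f i := Finset.sum_nonneg hs
    calc 1 + (f a + ∑ i ∈ s, f i) ≤ (1 + f a) * (1 + ∑ i ∈ s, f i) := by nlinarith
      _ ≤ (1 + f a) * ∏ i ∈ s, (1 + f i) := by
          exact mul_le_mul_of_nonneg_left (ih hs) (by linarith)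

theorem stmt_1 (B : ℕ) (hB : 1 ≤ B) (γ : ℝ) (hγ : 0 ≤ γ) (α : Fin B → ℝ) :
    (1 / (2 * B)) * Real.logb 2 (1 + 2 * γ * ∑ b, (α b) ^ 2) ≤
        (1 / B) * ∑ b, (1 / 2) * Real.logb 2 (1 + 2 * γ * (α b) ^ 2) ∧
      (1 / B) * ∑ b, (1 / 2) * Real.logb 2 (1 + 2 * γ * (α b) ^ 2) ≤
        (1 / 2) * Real.logb 2 (1 + 2 * γ * (∑ b, (α b) ^ 2) / B) := by
  have hBpos : (0:ℝ) < B := by exact_mod_cast hB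
  set z : Fin B → ℝ := fun b => 1 + 2 * γ * (α b) ^ 2 with hz
  have hz1 : ∀ b, (1:ℝ) ≤ z b := fun b => by
    have : 0 ≤ 2 * γ * (α b) ^ 2 := by positivity
    simp [hz]; linarith
  have hzpos : ∀ b, (0:ℝ) < z b := fun b => lt_of_lt_of_le one_pos (hz1 b)
  have hsum : (1 / B) * ∑ b, (1 / 2) * Real.logb 2 (z b)
      = (1 / (2 * B)) * ∑ b, Real.logb 2 (z b) := by
    rw [← Finset.mul_sum]; ring
  constructor
  · rw [show (1 / B) * ∑ b, (1 / 2) * Real.logb 2 (1 + 2 * γ * (α b) ^ 2)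
        = (1 / (2 * B)) * ∑ b, Real.logb 2 (z b) from hsum]
    apply mul_le_mul_of_nonneg_left _ (by positivity)
    rw [← Real.logb_prod _ _ (fun b _ => (hzpos b).ne')]
    apply Real.logb_le_logb_of_le one_lt_two (by positivity)
    calc 1 + 2 * γ * ∑ b, (α b) ^ 2 = 1 + ∑ b, 2 * γ * (α b) ^ 2 := by
          rw [Finset.mul_sum]
      _ ≤ ∏ b, z b := weierstrass _ _ (fun b _ => by positivity)
  · rw [show (1 / B) * ∑ b, (1 / 2) * Real.logb 2 (1 + 2 * γ * (α b) ^ 2)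
        = (1 / (2 * B)) * ∑ b, Real.logb 2 (z b) from hsum]
    have hAM : ∏ b, (z b) ^ ((1:ℝ) / B) ≤ ∑ b : Fin B, (1 / B) * z b := by
      apply Real.geom_mean_le_arith_mean_weighted
      · intro i _; positivity
      · rw [Finset.sum_const, Finset.card_fin, nsmul_eq_mul]
        field_simp
      · intro i _; exact (hzpos i).le
    have hmean : ∑ b : Fin B, (1 / (B:ℝ)) * z b
        = 1 + 2 * γ * (∑ b, (α b) ^ 2) / B := by
      have hsz : ∑ b, z b = (B:ℝ) + 2 * γ * ∑ b, (α b) ^ 2 := by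
        simp only [hz]
        rw [Finset.sum_add_distrib, Finset.sum_const, Finset.card_fin, nsmul_eq_mul,
          mul_one, ← Finset.mul_sum]
      rw [← Finset.mul_sum, hsz]
      field_simp
    have hlog : Real.logb 2 (∏ b, (z b) ^ ((1:ℝ) / B))
        = (1 / B) * ∑ b, Real.logb 2 (z b) := by
      rw [Real.logb_prod _ _ (fun b _ => by positivity)]
      rw [Finset.mul_sum]
      congr 1; ext b
      rw [Real.logb_rpow_eq_mul_logb_of_pos (hzpos b)]
    have key : (1 / (B:ℝ)) * ∑ b, Real.logb 2 (z b)
        ≤ Real.logb 2 (1 + 2 * γ * (∑ b, (α b) ^ 2) / B) := by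
      rw [← hlog, ← hmean]
      exact Real.logb_le_logb_of_le one_lt_two (by positivity) hAM
    calc (1 / (2 * B)) * ∑ b, Real.logb 2 (z b)
        = (1/2) * ((1 / (B:ℝ)) * ∑ b, Real.logb 2 (z b)) := by ring
      _ ≤ (1/2) * Real.logb 2 (1 + 2 * γ * (∑ b, (α b) ^ 2) / B) := by
          apply mul_le_mul_of_nonneg_left key (by norm_num)
end

section
/- Let B ≥ 1 be an integer, γ > 0 and R ≥ 0. Then the open ball {α : Fin B → ℝ | ∑_b α_b² < B·(4^{R} − 1)/(2γ)} is contained in the Gaussian-input outage region {α | (1/B) ∑_{b=1}^B (1/2) log₂(1 + 2γ α_b²) < R}. -/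
open Finset Real

theorem stmt_3 (B : ℕ) (hB : 1 ≤ B) (γ : ℝ) (hγ : 0 < γ) (R : ℝ) (hR : 0 ≤ R) :
    {α : Fin B → ℝ | ∑ b, (α b) ^ 2 < B * ((4 : ℝ) ^ (R : ℝ) - 1) / (2 * γ)} ⊆
      {α : Fin B → ℝ | (1 / B) * ∑ b, (1 / 2) * Real.logb 2 (1 + 2 * γ * (α b) ^ 2) < R} := by
  intro α hα
  simp only [Set.mem_setOf_eq] at hα ⊢
  have hB0 : (0:ℝ) < B := by exact_mod_cast Nat.lt_of_lt_of_le Nat.zero_lt_one hB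
  set z : Fin B → ℝ := fun b => 1 + 2 * γ * (α b) ^ 2 with hzdef
  have hz1 : ∀ b, (1:ℝ) ≤ z b := fun b => by
    have := sq_nonneg (α b); simp only [hzdef]; nlinarith
  have hS0 : 0 ≤ ∑ b, (α b) ^ 2 := Finset.sum_nonneg fun b _ => sq_nonneg _
  -- sum of weights is 1
  have hw1 : ∑ _b : Fin B, (1/(B:ℝ)) = 1 := by
    simp [Finset.sum_const, Finset.card_univ]
    field_simp
  -- the weighted mean
  have hmean : ∑ b, (1/(B:ℝ)) * z b = 1 + 2*γ/B * ∑ b, (α b)^2 := by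
    have : ∑ b, z b = B + 2*γ * ∑ b, (α b)^2 := by
      simp only [hzdef]
      rw [Finset.sum_add_distrib, Finset.sum_const, Finset.card_univ, ← Finset.mul_sum]
      simp
    rw [← Finset.mul_sum, this]
    field_simp
  have hmean1 : (1:ℝ) ≤ ∑ b, (1/(B:ℝ)) * z b := by
    rw [hmean]
    have : 0 ≤ 2*γ/B * ∑ b, (α b)^2 := by positivity
    linarith
  have hmeanlt : ∑ b, (1/(B:ℝ)) * z b < (4:ℝ) ^ (R:ℝ) := by
    rw [hmean]
    rw [lt_div_iff₀ (by positivity : (0:ℝ) < 2*γ)] at hα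
    have haux : 2*γ/↑B * (∑ b, (α b)^2) * B = 2*γ * ∑ b, (α b)^2 := by
      field_simp
    nlinarith
  -- Jensen
  have hJ : ∑ b, (1/(B:ℝ)) * Real.log (z b) ≤ Real.log (∑ b, (1/(B:ℝ)) * z b) := by
    have := strictConcaveOn_log_Ioi.concaveOn.le_map_sum
      (t := Finset.univ) (w := fun _ : Fin B => (1/(B:ℝ))) (p := z)
      (fun i _ => by positivity) hw1
      (fun i _ => Set.mem_Ioi.mpr (lt_of_lt_of_le one_pos (hz1 i)))
    simpa [smul_eq_mul] using this
  have hlog4 : Real.log ((4:ℝ) ^ (R:ℝ)) = R * (2 * Real.log 2) := by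
    rw [Real.log_rpow (by norm_num : (0:ℝ) < 4)]
    have : (4:ℝ) = 2^2 := by norm_num
    rw [this, Real.log_pow]
    push_cast; ring
  have hkey : ∑ b, (1/(B:ℝ)) * Real.log (z b) < R * (2 * Real.log 2) := by
    calc ∑ b, (1/(B:ℝ)) * Real.log (z b) ≤ Real.log (∑ b, (1/(B:ℝ)) * z b) := hJ
      _ < Real.log ((4:ℝ) ^ (R:ℝ)) := Real.log_lt_log (by linarith) hmeanlt
      _ = R * (2 * Real.log 2) := hlog4
  have hlog2 : 0 < Real.log 2 := Real.log_pos (by norm_num)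
  -- rewrite goal
  have hgoal : (1 / (B:ℝ)) * ∑ b, (1 / 2) * Real.logb 2 (z b)
      = (1/(2 * Real.log 2)) * ∑ b, (1/(B:ℝ)) * Real.log (z b) := by
    rw [Finset.mul_sum, Finset.mul_sum]
    apply Finset.sum_congr rfl
    intro b _
    simp only [Real.logb]
    ring
  show (1 / (B:ℝ)) * ∑ b, (1 / 2) * Real.logb 2 (z b) < R
  rw [hgoal]
  rw [div_mul_eq_mul_div, one_mul, div_lt_iff₀ (by positivity : (0:ℝ) < 2 * Real.log 2)]
  linarith [hkey]
end

section
/- Let B ≥ 1 be an integer, γ > 0 and R ∈ ℝ. Let F : ℝ → ℝ be concave on [0, ∞), nondecreasing on [0, ∞), with F(0) = 0, and let C_o ≥ 0 satisfy F(γ · C_o) = B · R. Then every α : Fin B → ℝ with (1/B) ∑_{b=1}^B F(γ α_b²) < R satisfies ∑_b α_b² < C_o. -/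
/-!
A concave function on `[0, ∞)` with `F 0 = 0` is subadditive there, so
`F (γ ∑ α_b²) ≤ ∑ F (γ α_b²) < B R = F (γ C_o)`; monotonicity of `F` then forces `∑ α_b² < C_o`.
-/

open Finset

namespace ConcaveOn

variable {F : ℝ → ℝ}

theorem mul_le_map_mul (hF : ConcaveOn ℝ (Set.Ici 0) F) (hF0 : 0 ≤ F 0) {t x : ℝ}
    (ht₀ : 0 ≤ t) (ht₁ : t ≤ 1) (hx : 0 ≤ x) : t * F x ≤ F (t * x) := by
  have h := hF.2 (Set.mem_Ici.2 hx) (Set.mem_Ici.2 le_rfl) ht₀ (sub_nonneg.2 ht₁)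
    (add_sub_cancel t 1)
  simp only [smul_eq_mul, mul_zero, add_zero] at h
  nlinarith [mul_nonneg (sub_nonneg.2 ht₁) hF0]

theorem map_add_le (hF : ConcaveOn ℝ (Set.Ici 0) F) (hF0 : 0 ≤ F 0) {x y : ℝ}
    (hx : 0 ≤ x) (hy : 0 ≤ y) : F (x + y) ≤ F x + F y := by
  rcases (add_nonneg hx hy).eq_or_lt with hxy | hxy
  · obtain ⟨rfl, rfl⟩ : x = 0 ∧ y = 0 := ⟨by linarith, by linarith⟩
    simpa using hF0
  -- Write `x` and `y` as the fractions `x / (x + y)` and `y / (x + y)` of `x + y`.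
  have hs := add_nonneg hx hy
  have hx' := hF.mul_le_map_mul hF0 (div_nonneg hx hxy.le)
    ((div_le_one hxy).2 (le_add_of_nonneg_right hy)) hs
  have hy' := hF.mul_le_map_mul hF0 (div_nonneg hy hxy.le)
    ((div_le_one hxy).2 (le_add_of_nonneg_left hx)) hs
  rw [div_mul_cancel₀ _ hxy.ne'] at hx' hy'
  calc F (x + y) = x / (x + y) * F (x + y) + y / (x + y) * F (x + y) := by
        field_simp
    _ ≤ F x + F y := add_le_add hx' hy'

theorem map_sum_le {ι : Type*} (hF : ConcaveOn ℝ (Set.Ici 0) F) (hF0 : F 0 = 0)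
    (s : Finset ι) (x : ι → ℝ) (hx : ∀ i ∈ s, 0 ≤ x i) :
    F (∑ i ∈ s, x i) ≤ ∑ i ∈ s, F (x i) :=
  Finset.le_sum_of_subadditive_on_pred F (0 ≤ ·) hF0.le
    (fun _ _ ha hb ↦ hF.map_add_le hF0.ge ha hb) (fun _ _ ↦ add_nonneg) x hx

end ConcaveOn

theorem stmt_4 (B : ℕ) (hB : 1 ≤ B) (γ : ℝ) (hγ : 0 < γ) (R : ℝ)
    (F : ℝ → ℝ) (hFconc : ConcaveOn ℝ (Set.Ici 0) F)
    (hFmono : MonotoneOn F (Set.Ici 0)) (hF0 : F 0 = 0)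
    (Co : ℝ) (hCo : 0 ≤ Co) (hFCo : F (γ * Co) = B * R)
    (α : Fin B → ℝ) (hα : (1 / B) * ∑ b, F (γ * (α b) ^ 2) < R) :
    ∑ b, (α b) ^ 2 < Co := by
  by_contra! hS
  have hB' : (0 : ℝ) < B := by exact_mod_cast hB
  have hsum : ∑ b, F (γ * (α b) ^ 2) < B * R := by
    rwa [one_div, inv_mul_lt_iff₀ hB'] at hα
  have hsub : F (γ * ∑ b, (α b) ^ 2) ≤ ∑ b, F (γ * (α b) ^ 2) := by
    rw [mul_sum]
    exact hFconc.map_sum_le hF0 _ _ fun b _ ↦ by positivity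
  have hmono : F (γ * Co) ≤ F (γ * ∑ b, (α b) ^ 2) :=
    hFmono (Set.mem_Ici.2 (by positivity)) (Set.mem_Ici.2 (by positivity))
      (mul_le_mul_of_nonneg_left hS hγ.le)
  linarith
end

section
/- Let B ≥ 1 be an integer and let S be a set of vectors x : ZMod B → ℝ invariant under the cyclic shift C (where (C x)(b) = x(b − 1)). Let x, x' ∈ S be distinct with ∑_{b} (x(b) − x'(b))² = d². Then for every s ≥ 0 and every α : ZMod B → ℝ with ∑_b α(b)² = B·s, there exist distinct y, y' ∈ S with ∑_b α(b)² · (y(b) − y'(b))² ≤ s · d². -/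
open Finset

theorem stmt_11 (B : ℕ) [NeZero B] (S : Set (ZMod B → ℝ))
    (hS : ∀ x ∈ S, (fun b => x (b - 1)) ∈ S)
    (x x' : ZMod B → ℝ) (hx : x ∈ S) (hx' : x' ∈ S) (hne : x ≠ x')
    (d : ℝ) (hd : ∑ b, (x b - x' b) ^ 2 = d ^ 2) :
    ∀ s : ℝ, 0 ≤ s → ∀ α : ZMod B → ℝ, ∑ b, (α b) ^ 2 = B * s →
      ∃ y ∈ S, ∃ y' ∈ S, y ≠ y' ∧ ∑ b, (α b) ^ 2 * (y b - y' b) ^ 2 ≤ s * d ^ 2 := by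
  intro s hs α hα
  -- shifts by naturals stay in S
  have shiftN : ∀ (n : ℕ) (z : ZMod B → ℝ), z ∈ S → (fun b => z (b - (n : ZMod B))) ∈ S := by
    intro n
    induction n with
    | zero => intro z hz; simpa using hz
    | succ m ih =>
      intro z hz
      have h1 := hS _ (ih z hz)
      have : (fun b : ZMod B => z (b - 1 - (m : ZMod B))) = (fun b => z (b - ((m + 1 : ℕ) : ZMod B))) := by
        funext b
        congr 1
        push_cast
        ring
      rw [← this]
      exact h1
  have shiftZ : ∀ (k : ZMod B) (z : ZMod B → ℝ), z ∈ S → (fun b => z (b - k)) ∈ S := by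
    intro k z hz
    have := shiftN k.val z hz
    rwa [ZMod.natCast_val, ZMod.cast_id] at this
  -- the averaged sum
  set F : ZMod B → ℝ := fun k => ∑ b, (α b) ^ 2 * (x (b - k) - x' (b - k)) ^ 2 with hF
  have hsum : ∑ k, F k = (B : ℝ) * (s * d ^ 2) := by
    rw [hF]
    rw [Finset.sum_comm]
    have : ∀ b : ZMod B, ∑ k, (α b) ^ 2 * (x (b - k) - x' (b - k)) ^ 2
        = (α b) ^ 2 * d ^ 2 := by
      intro b
      rw [← Finset.mul_sum]
      congr 1
      rw [← hd]
      exact Fintype.sum_equiv (Equiv.subLeft b) _ _ (fun k => rfl)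
    simp only [this]
    rw [← Finset.sum_mul, hα]
    ring
  have hcard : (Finset.univ : Finset (ZMod B)).card = B := by
    simp [ZMod.card]
  obtain ⟨k, -, hk⟩ := Finset.exists_le_of_sum_le (f := F) (g := fun _ => s * d ^ 2)
    (Finset.univ_nonempty (α := ZMod B))
    (by
      rw [hsum, Finset.sum_const, hcard, nsmul_eq_mul])
  refine ⟨fun b => x (b - k), shiftZ k x hx, fun b => x' (b - k), shiftZ k x' hx', ?_, by simpa [hF] using hk⟩
  intro h
  apply hne
  funext c
  have := congrFun h (c + k)
  simpa using this
end

section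
/- For every integer B ≥ 1 and every real x ≥ 0: 1 − e^{−x} · ∑_{k=0}^{B−1} x^k / k! ≤ x^B. -/
open Finset Real

lemma exp_tsum_div (x : ℝ) : Real.exp x = ∑' n : ℕ, x ^ n / (Nat.factorial n : ℝ) := by
  rw [Real.exp_eq_exp_ℝ, NormedSpace.exp_eq_tsum_div]

theorem stmt_15 (B : ℕ) (hB : 1 ≤ B) (x : ℝ) (hx : 0 ≤ x) :
    1 - Real.exp (-x) * ∑ k ∈ Finset.range B, x ^ k / (Nat.factorial k : ℝ) ≤ x ^ B := by
  have hs := Real.summable_pow_div_factorial x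
  have hsplit := Summable.sum_add_tsum_nat_add B hs
  have htail : ∑' j : ℕ, x ^ (j + B) / (Nat.factorial (j + B) : ℝ)
      ≤ x ^ B * Real.exp x := by
    rw [exp_tsum_div, ← tsum_mul_left]
    refine Summable.tsum_le_tsum (fun j => ?_) (hs.comp_injective (fun a b => by omega)) (hs.mul_left _)
    rw [pow_add, mul_comm (x ^ j), mul_div_assoc]
    refine mul_le_mul_of_nonneg_left ?_ (pow_nonneg hx B)
    apply div_le_div_of_nonneg_left (pow_nonneg hx j) (by positivity)
    exact_mod_cast Nat.factorial_le (by omega)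
  have key : Real.exp x - ∑ k ∈ Finset.range B, x ^ k / (Nat.factorial k : ℝ)
      ≤ x ^ B * Real.exp x := by
    have h1 : Real.exp x - ∑ k ∈ Finset.range B, x ^ k / (Nat.factorial k : ℝ)
        = ∑' j : ℕ, x ^ (j + B) / (Nat.factorial (j + B) : ℝ) := by
      rw [exp_tsum_div]; linarith
    linarith
  have hpos := Real.exp_pos x
  have h2 := mul_le_mul_of_nonneg_right key (inv_nonneg.mpr hpos.le)
  rw [sub_mul, mul_inv_cancel₀ hpos.ne', mul_assoc, mul_inv_cancel₀ hpos.ne', mul_one] at h2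
  rw [Real.exp_neg, mul_comm]
  exact h2
end
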